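/- arXiv:1409.1399 — 10 statements merged into one kernel-verified Lean document; each statement's English description precedes it below -/
import Mathlib

section
/- Let f be a non-negative submodular set function on U, let S, C ⊆ U, and let T_1,...,T_t be subsets of C \ S such that each element of C \ S appears in exactly p of the T_ℓ. Then ∑_{ℓ=1}^t (f(S ∪ T_ℓ) − f(S)) ≥ p·(f(S ∪ C) − f(S)). -/
private lemma marg_aux {U : Type*} [DecidableEq U]
    (f : Finset U → ℝ)
    (hsub : ∀ A B : Finset U, f (A ∩ B) + f (A ∪ B) ≤ f A + f B)
    {A B : Finset U} {e : U} (hAB : A ⊆ B) (he : e ∉ B) :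
    f (insert e B) - f B ≤ f (insert e A) - f A := by
  have h := hsub (insert e A) B
  have h1 : insert e A ∩ B = A := by
    ext x
    simp only [Finset.mem_inter, Finset.mem_insert]
    constructor
    · rintro ⟨hx | hx, hxB⟩
      · exact absurd (hx ▸ hxB) he
      · exact hx
    · intro hx; exact ⟨Or.inr hx, hAB hx⟩
  have h2 : insert e A ∪ B = insert e B := by
    ext x
    simp only [Finset.mem_union, Finset.mem_insert]
    tauto
  rw [h1, h2] at h
  linarith

private lemma main_aux {U : Type*} [Fintype U] [DecidableEq U]
    (f : Finset U → ℝ)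
    (hsub : ∀ A B : Finset U, f (A ∩ B) + f (A ∪ B) ≤ f A + f B)
    (S : Finset U) (D : Finset U) (hSD : Disjoint S D) :
    ∀ (t p : ℕ) (T : Fin t → Finset U), (∀ ℓ, T ℓ ⊆ D) →
    (∀ e ∈ D, (Finset.univ.filter fun ℓ => e ∈ T ℓ).card = p) →
    (p : ℝ) * (f (S ∪ D) - f S) ≤ ∑ ℓ : Fin t, (f (S ∪ T ℓ) - f S) := by
  induction D using Finset.induction_on with
  | empty =>
    intro t p T hT hp
    have : ∀ ℓ, T ℓ = ∅ := fun ℓ => Finset.subset_empty.mp (hT ℓ)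
    simp [this]
  | @insert e D' he ih =>
    intro t p T hT hp
    have hSD' : Disjoint S D' := hSD.mono_right (Finset.subset_insert e D')
    have heS : e ∉ S := Finset.disjoint_right.mp hSD (Finset.mem_insert_self e D')
    set T' : Fin t → Finset U := fun ℓ => (T ℓ).erase e with hT'def
    have hT' : ∀ ℓ, T' ℓ ⊆ D' := by
      intro ℓ x hx
      have hxe : x ≠ e := Finset.ne_of_mem_erase hx
      have := hT ℓ (Finset.mem_of_mem_erase hx)
      rcases Finset.mem_insert.mp this with h | h
      · exact absurd h hxe
      · exact h
    have hp' : ∀ e' ∈ D', (Finset.univ.filter fun ℓ => e' ∈ T' ℓ).card = p := by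
      intro e' he'
      have hne : e' ≠ e := fun h => he (h ▸ he')
      have : (Finset.univ.filter fun ℓ => e' ∈ T' ℓ) =
          (Finset.univ.filter fun ℓ => e' ∈ T ℓ) := by
        apply Finset.filter_congr
        intro ℓ _
        simp [hT'def, Finset.mem_erase, hne]
      rw [this]
      exact hp e' (Finset.mem_insert_of_mem he')
    have hIH := ih hSD' t p T' hT' hp'
    set c : ℝ := f (insert e (S ∪ D')) - f (S ∪ D') with hc
    have heSD' : e ∉ S ∪ D' := by
      simp only [Finset.mem_union]
      rintro (h | h)
      · exact heS h
      · exact he h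
    have key : ∀ ℓ : Fin t,
        (if e ∈ T ℓ then c else 0) ≤ f (S ∪ T ℓ) - f (S ∪ T' ℓ) := by
      intro ℓ
      by_cases hmem : e ∈ T ℓ
      · simp only [hmem, if_true]
        have h1 : S ∪ T ℓ = insert e (S ∪ T' ℓ) := by
          ext x
          simp only [Finset.mem_union, Finset.mem_insert, hT'def, Finset.mem_erase]
          constructor
          · rintro (h | h)
            · exact Or.inr (Or.inl h)
            · by_cases hx : x = e
              · exact Or.inl hx
              · exact Or.inr (Or.inr ⟨hx, h⟩)
          · rintro (h | h | ⟨_, h⟩)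
            · exact Or.inr (h ▸ hmem)
            · exact Or.inl h
            · exact Or.inr h
        have hsubset : S ∪ T' ℓ ⊆ S ∪ D' := Finset.union_subset_union_right (hT' ℓ)
        have := marg_aux f hsub hsubset heSD'
        rw [h1]
        linarith
      · simp only [hmem, if_false]
        have : T' ℓ = T ℓ := Finset.erase_eq_of_notMem hmem
        rw [this]
        linarith
    have hsum : ∑ ℓ : Fin t, (if e ∈ T ℓ then c else 0) ≤
        ∑ ℓ : Fin t, (f (S ∪ T ℓ) - f (S ∪ T' ℓ)) :=
      Finset.sum_le_sum fun ℓ _ => key ℓ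
    have hcount : ∑ ℓ : Fin t, (if e ∈ T ℓ then c else 0) = (p : ℝ) * c := by
      rw [← Finset.sum_filter, Finset.sum_const,
        hp e (Finset.mem_insert_self e D'), nsmul_eq_mul]
    have hsplit : ∑ ℓ : Fin t, (f (S ∪ T ℓ) - f S) =
        (∑ ℓ : Fin t, (f (S ∪ T' ℓ) - f S)) +
        (∑ ℓ : Fin t, (f (S ∪ T ℓ) - f (S ∪ T' ℓ))) := by
      rw [← Finset.sum_add_distrib]
      congr 1
      ext ℓ
      ring
    have hunion : S ∪ insert e D' = insert e (S ∪ D') := by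
      ext x; simp only [Finset.mem_union, Finset.mem_insert]; tauto
    rw [hunion]
    rw [hsplit]
    rw [hcount] at hsum
    nlinarith [hIH, hsum]

theorem stmt_1 {U : Type*} [Fintype U] [DecidableEq U]
    (f : Finset U → ℝ)
    (hnn : ∀ A : Finset U, 0 ≤ f A)
    (hsub : ∀ A B : Finset U, f (A ∩ B) + f (A ∪ B) ≤ f A + f B)
    (S C : Finset U) (t p : ℕ) (T : Fin t → Finset U)
    (hT : ∀ ℓ, T ℓ ⊆ C \ S)
    (hp : ∀ e ∈ C \ S, (Finset.univ.filter fun ℓ => e ∈ T ℓ).card = p) :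
    (p : ℝ) * (f (S ∪ C) - f S) ≤ ∑ ℓ : Fin t, (f (S ∪ T ℓ) - f S) := by
  have hSD : Disjoint S (C \ S) := Finset.disjoint_sdiff
  have h := main_aux f hsub S (C \ S) hSD t p T hT hp
  rwa [Finset.union_sdiff_self_eq_union] at h
end

section
/- Let k ≥ 2 and let f : {0,...,k}^U → ℝ≥0 be submodular in every orthant and pairwise monotone. Suppose a, b ∈ {0,...,k}^U satisfy 0 ≠ a_e ≠ b_e ≠ 0 for all e ∈ I and a_e = b_e for all e ∈ U \ I, and let c = a|_{U\I} = b|_{U\I}. Then f(a) + f(b) ≥ 2·f(c). -/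
/-- min₀: coordinate-wise operation. -/
def min0 {k : ℕ} (a b : Fin (k+1)) : Fin (k+1) :=
  if a ≠ 0 ∧ b ≠ 0 ∧ a ≠ b then 0 else min a b

/-- max₀: coordinate-wise operation. -/
def max0 {k : ℕ} (a b : Fin (k+1)) : Fin (k+1) :=
  if a ≠ 0 ∧ b ≠ 0 ∧ a ≠ b then 0 else max a b

/-- k-submodularity. -/
def kSubmodular {U : Type*} {k : ℕ} (f : (U → Fin (k+1)) → ℝ) : Prop :=
  ∀ s t : U → Fin (k+1),
    f (fun e => min0 (s e) (t e)) + f (fun e => max0 (s e) (t e)) ≤ f s + f t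

/-- restriction of a vector to a finset. -/
def restrict {U : Type*} [DecidableEq U] {k : ℕ} (x : U → Fin (k+1)) (S : Finset U) :
    U → Fin (k+1) := fun e => if e ∈ S then x e else 0

/-- submodular in every orthant: the k-submodular inequality holds whenever the two
arguments agree on all coordinates where both are non-zero. -/
def SubmodularEveryOrthant {U : Type*} {k : ℕ} (f : (U → Fin (k+1)) → ℝ) : Prop :=
  ∀ a b : U → Fin (k+1), (∀ e, a e ≠ 0 → b e ≠ 0 → a e = b e) →
    f (fun e => min0 (a e) (b e)) + f (fun e => max0 (a e) (b e)) ≤ f a + f b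

/-- pairwise monotonicity. -/
def PairwiseMonotone {U : Type*} [DecidableEq U] {k : ℕ} (f : (U → Fin (k+1)) → ℝ) : Prop :=
  ∀ (s : U → Fin (k+1)) (e : U), s e = 0 →
    ∀ i j : Fin (k+1), i ≠ 0 → j ≠ 0 → i ≠ j →
      0 ≤ (f (Function.update s e i) - f s) + (f (Function.update s e j) - f s)


lemma aux_stmt5 {U : Type*} [DecidableEq U] {k : ℕ}
    (f : (U → Fin (k+1)) → ℝ)
    (hsub : SubmodularEveryOrthant f) (hmono : PairwiseMonotone f) :
    ∀ I : Finset U, ∀ a b : U → Fin (k+1),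
      (∀ e ∈ I, a e ≠ 0 ∧ b e ≠ 0 ∧ a e ≠ b e) →
      (∀ e ∉ I, a e = b e) →
      ∀ c : U → Fin (k+1), (∀ e, c e = if e ∈ I then 0 else a e) →
      2 * f c ≤ f a + f b := by
  intro I
  induction I using Finset.induction_on with
  | empty =>
    intro a b hI hag c hc
    have hca : c = a := funext fun e => by simpa using hc e
    have hba : b = a := funext fun e => (hag e (by simp)).symm
    rw [hca, hba]; linarith
  | @insert e s he ih =>
    intro a b hI hag c hc
    obtain ⟨ha0, hb0, hab⟩ := hI e (Finset.mem_insert_self e s)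
    set a₀ : U → Fin (k+1) := Function.update a e 0 with ha₀
    set a₁ : U → Fin (k+1) := Function.update a e (b e) with ha₁
    set c₁ : U → Fin (k+1) := Function.update c e (b e) with hc₁
    -- pairwise monotonicity at a₀
    have hm := hmono a₀ e (by simp [ha₀]) (a e) (b e) ha0 hb0 hab
    have hupd1 : Function.update a₀ e (a e) = a := by
      funext x
      rcases eq_or_ne x e with rfl | hx
      · simp
      · simp [ha₀, Function.update_of_ne hx]
    have hupd2 : Function.update a₀ e (b e) = a₁ := by
      funext x
      rcases eq_or_ne x e with rfl | hx
      · simp [ha₁]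
      · simp [ha₀, ha₁, Function.update_of_ne hx]
    rw [hupd1, hupd2] at hm
    -- induction hypothesis applied to a₁, b on s
    have hIH : 2 * f c₁ ≤ f a₁ + f b := by
      apply ih a₁ b
      · intro x hx
        have hxe : x ≠ e := fun h => he (h ▸ hx)
        have := hI x (Finset.mem_insert_of_mem hx)
        simpa [ha₁, Function.update_of_ne hxe] using this
      · intro x hx
        rcases eq_or_ne x e with rfl | hxe
        · simp [ha₁]
        · rw [ha₁, Function.update_of_ne hxe]
          exact hag x (by simp [hxe, hx])
      · intro x
        rcases eq_or_ne x e with rfl | hxe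
        · simp [hc₁, ha₁, he]
        · rw [hc₁, Function.update_of_ne hxe, hc x, ha₁, Function.update_of_ne hxe]
          simp [Finset.mem_insert, hxe]
    -- orthant submodularity on a₀ and c₁
    have horth : ∀ x, a₀ x ≠ 0 → c₁ x ≠ 0 → a₀ x = c₁ x := by
      intro x h1 h2
      rcases eq_or_ne x e with rfl | hxe
      · simp [ha₀] at h1
      · rw [ha₀, Function.update_of_ne hxe] at h1 ⊢
        rw [hc₁, Function.update_of_ne hxe, hc x] at h2 ⊢
        by_cases hx : x ∈ insert e s
        · simp [hx] at h2
        · simp [hx]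
    have hs := hsub a₀ c₁ horth
    have hminf : (fun x => min0 (a₀ x) (c₁ x)) = c := by
      funext x
      rcases eq_or_ne x e with rfl | hxe
      · simp [ha₀, hc₁, min0, hc x, Finset.mem_insert_self]
      · rw [ha₀, hc₁] at *
        rw [Function.update_of_ne hxe, Function.update_of_ne hxe, hc x]
        by_cases hx : x ∈ insert e s
        · rcases Finset.mem_insert.mp hx with rfl | hxs
          · exact absurd rfl hxe
          · have := (hI x (Finset.mem_insert_of_mem hxs)).1
            simp [hx, min0, Fin.le_zero_iff]
        · simp [hx, min0]
    have hmaxf : (fun x => max0 (a₀ x) (c₁ x)) = a₁ := by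
      funext x
      rcases eq_or_ne x e with rfl | hxe
      · simp [ha₀, ha₁, hc₁, max0, Fin.zero_le]
      · rw [ha₀, hc₁, ha₁]
        rw [Function.update_of_ne hxe, Function.update_of_ne hxe,
          Function.update_of_ne hxe, hc x]
        by_cases hx : x ∈ insert e s
        · simp [hx, max0, Fin.le_zero_iff, Fin.zero_le]
        · simp [hx, max0]
    rw [hminf, hmaxf] at hs
    linarith

theorem stmt_5 {U : Type*} [DecidableEq U] {k : ℕ} (hk : 2 ≤ k)
    (f : (U → Fin (k+1)) → ℝ)
    (hnn : ∀ s, 0 ≤ f s)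
    (hsub : SubmodularEveryOrthant f) (hmono : PairwiseMonotone f)
    (a b : U → Fin (k+1)) (I : Finset U)
    (hI : ∀ e ∈ I, a e ≠ 0 ∧ b e ≠ 0 ∧ a e ≠ b e)
    (hagree : ∀ e ∉ I, a e = b e)
    (c : U → Fin (k+1)) (hc : ∀ e, c e = if e ∈ I then 0 else a e) :
    2 * f c ≤ f a + f b := by
  exact aux_stmt5 f hsub hmono I a b hI hagree c hc
end

section
/- Let k ≥ 3 and let f : {0,...,k}^U → ℝ≥0 be k-submodular with |U| = n. Let o ∈ {1,...,k}^U be an orthant, and for A ⊆ U let P(A) be the set of orthants x ∈ {1,...,k}^U with x_e = o_e exactly for e ∈ A. Then ∑_{x ∈ P(A)} f(x) ≥ (k−1)^{n−|A|} · f(o|_A). -/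
lemma key_lemma {U : Type*} [DecidableEq U] {k : ℕ} (hk : 3 ≤ k)
    (f : (U → Fin (k+1)) → ℝ) (hsub : kSubmodular f)
    (y : U → Fin (k+1)) (e : U) (hye : y e = 0) (a : Fin (k+1)) (ha : a ≠ 0) :
    ((k : ℝ) - 1) * f y ≤
      ∑ c ∈ Finset.univ.filter (fun c : Fin (k+1) => c ≠ 0 ∧ c ≠ a),
        f (Function.update y e c) := by
  set S := Finset.univ.filter (fun c : Fin (k+1) => c ≠ 0 ∧ c ≠ a) with hS
  have hScard : S.card = k - 1 := by
    have hSc : S = ({0, a} : Finset (Fin (k+1)))ᶜ := by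
      ext c
      simp [hS, not_or]
    rw [hSc, Finset.card_compl, Finset.card_insert_of_notMem (by simpa using ha.symm),
      Finset.card_singleton, Fintype.card_fin]
    omega
  have hpair : ∀ c ∈ S, ∀ c' ∈ S, c ≠ c' →
      f y + f y ≤ f (Function.update y e c) + f (Function.update y e c') := by
    intro c hc c' hc' hne
    simp only [hS, Finset.mem_filter] at hc hc'
    have h := hsub (Function.update y e c) (Function.update y e c')
    have h1 : (fun d => min0 (Function.update y e c d) (Function.update y e c' d)) = y := by
      funext d
      rcases eq_or_ne d e with rfl | hd
      · simp [min0, hc.2.1, hc'.2.1, hne, hye]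
      · simp [Function.update_of_ne hd, min0]
    have h2 : (fun d => max0 (Function.update y e c d) (Function.update y e c' d)) = y := by
      funext d
      rcases eq_or_ne d e with rfl | hd
      · simp [max0, hc.2.1, hc'.2.1, hne, hye]
      · simp [Function.update_of_ne hd, max0]
    rw [h1, h2] at h
    exact h
  set T := ∑ c ∈ S, f (Function.update y e c) with hT
  have hcard2 : 2 ≤ S.card := by omega
  have h2 : ∑ c ∈ S, ∑ c' ∈ S.erase c, (f y + f y)
      ≤ ∑ c ∈ S, ∑ c' ∈ S.erase c,
        (f (Function.update y e c) + f (Function.update y e c')) := by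
    apply Finset.sum_le_sum
    intro c hc
    apply Finset.sum_le_sum
    intro c' hc'
    exact hpair c hc c' (Finset.mem_of_mem_erase hc') (Finset.ne_of_mem_erase hc').symm
  have hL : ∑ c ∈ S, ∑ c' ∈ S.erase c, (f y + f y)
      = (S.card : ℝ) * (((S.card : ℝ) - 1) * (f y + f y)) := by
    rw [Finset.sum_congr rfl (fun c hc => by
      rw [Finset.sum_const, Finset.card_erase_of_mem hc, nsmul_eq_mul,
        Nat.cast_sub (by omega : 1 ≤ S.card), Nat.cast_one])]
    rw [Finset.sum_const, nsmul_eq_mul]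
  have hR : ∑ c ∈ S, ∑ c' ∈ S.erase c,
        (f (Function.update y e c) + f (Function.update y e c'))
      = (2 * (S.card : ℝ) - 2) * T := by
    have step : ∀ c ∈ S, ∑ c' ∈ S.erase c,
        (f (Function.update y e c) + f (Function.update y e c'))
        = ((S.card : ℝ) - 1) * f (Function.update y e c) + (T - f (Function.update y e c)) := by
      intro c hc
      rw [Finset.sum_add_distrib, Finset.sum_const, Finset.card_erase_of_mem hc, nsmul_eq_mul,
        Nat.cast_sub (by omega : 1 ≤ S.card), Nat.cast_one]
      congr 1
      have := Finset.add_sum_erase S (fun c => f (Function.update y e c)) hc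
      rw [hT]
      linarith
    rw [Finset.sum_congr rfl step, Finset.sum_add_distrib, Finset.sum_sub_distrib,
      ← Finset.mul_sum, Finset.sum_const, nsmul_eq_mul, ← hT]
    ring
  rw [hL, hR] at h2
  have hn : ((S.card : ℝ)) = (k : ℝ) - 1 := by
    rw [hScard, Nat.cast_sub (by omega : 1 ≤ k), Nat.cast_one]
  rw [hn] at h2
  have hk2 : (2 : ℝ) ≤ (k : ℝ) - 1 := by
    have : (3 : ℝ) ≤ (k : ℝ) := by exact_mod_cast hk
    linarith
  nlinarith [h2]

lemma main_lemma {U : Type*} [Fintype U] [DecidableEq U] {k : ℕ} (hk : 3 ≤ k)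
    (f : (U → Fin (k+1)) → ℝ) (hnn : ∀ s, 0 ≤ f s) (hsub : kSubmodular f)
    (o : U → Fin (k+1)) (ho : ∀ e, o e ≠ 0) (A : Finset U) :
    ∀ m : ℕ, ∀ B : Finset U, A ⊆ B → B.card = A.card + m →
    ((k : ℝ) - 1) ^ m * f (restrict o A) ≤
      ∑ x ∈ Finset.univ.filter
          (fun x : U → Fin (k+1) =>
            ∀ e, (e ∈ B → x e ≠ 0 ∧ (x e = o e ↔ e ∈ A)) ∧ (e ∉ B → x e = 0)), f x := by
  intro m
  induction m with
  | zero =>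
    intro B hAB hcard
    have hBA : A = B := Finset.eq_of_subset_of_card_le hAB (by omega)
    subst hBA
    have hset : Finset.univ.filter
          (fun x : U → Fin (k+1) =>
            ∀ e, (e ∈ A → x e ≠ 0 ∧ (x e = o e ↔ e ∈ A)) ∧ (e ∉ A → x e = 0))
        = {restrict o A} := by
      ext x
      simp only [Finset.mem_filter, Finset.mem_univ, true_and, Finset.mem_singleton]
      constructor
      · intro h
        funext d
        by_cases hd : d ∈ A
        · rw [restrict]
          simp only [hd, if_pos]
          exact ((h d).1 hd).2.mpr hd
        · rw [restrict]
          simp only [hd, if_neg]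
          simpa using (h d).2 hd
      · rintro rfl d
        constructor
        · intro hd
          refine ⟨by simp [restrict, hd, ho d], by simp [restrict, hd]⟩
        · intro hd
          simp [restrict, hd]
    rw [hset, Finset.sum_singleton, pow_zero, one_mul]
  | succ m ih =>
    intro B hAB hcard
    have hex : (B \ A).Nonempty := by
      apply Finset.card_pos.mp
      rw [Finset.card_sdiff_of_subset hAB]
      omega
    obtain ⟨e, he⟩ := hex
    have heB : e ∈ B := (Finset.mem_sdiff.mp he).1
    have heA : e ∉ A := (Finset.mem_sdiff.mp he).2
    set B' := B.erase e with hB'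
    have heB' : e ∉ B' := Finset.notMem_erase e B
    have hAB' : A ⊆ B' := fun d hd => Finset.mem_erase.mpr ⟨fun h => heA (h ▸ hd), hAB hd⟩
    have hcard' : B'.card = A.card + m := by
      rw [hB', Finset.card_erase_of_mem heB]; omega
    set S := Finset.univ.filter (fun c : Fin (k+1) => c ≠ 0 ∧ c ≠ o e) with hS
    set QB := Finset.univ.filter
          (fun x : U → Fin (k+1) =>
            ∀ d, (d ∈ B → x d ≠ 0 ∧ (x d = o d ↔ d ∈ A)) ∧ (d ∉ B → x d = 0)) with hQB
    set QB' := Finset.univ.filter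
          (fun x : U → Fin (k+1) =>
            ∀ d, (d ∈ B' → x d ≠ 0 ∧ (x d = o d ↔ d ∈ A)) ∧ (d ∉ B' → x d = 0)) with hQB'
    have hsum : ∑ x ∈ QB, f x = ∑ p ∈ S ×ˢ QB', f (Function.update p.2 e p.1) := by
      apply Finset.sum_nbij' (fun x => ((x e, Function.update x e 0) : Fin (k+1) × (U → Fin (k+1))))
        (fun p => Function.update p.2 e p.1)
      · intro x hx
        simp only [hQB, Finset.mem_filter, Finset.mem_univ, true_and] at hx
        simp only [Finset.mem_product, hS, hQB', Finset.mem_filter, Finset.mem_univ, true_and]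
        refine ⟨⟨((hx e).1 heB).1, fun h => heA (((hx e).1 heB).2.mp h)⟩, ?_⟩
        intro d
        constructor
        · intro hd
          have hdB : d ∈ B := Finset.mem_of_mem_erase hd
          have hde : d ≠ e := Finset.ne_of_mem_erase hd
          rw [Function.update_of_ne hde]
          exact (hx d).1 hdB
        · intro hd
          by_cases hde : d = e
          · subst hde; simp
          · rw [Function.update_of_ne hde]
            exact (hx d).2 (fun hdB => hd (Finset.mem_erase.mpr ⟨hde, hdB⟩))
      · intro p hp
        simp only [Finset.mem_product, hS, hQB', Finset.mem_filter, Finset.mem_univ,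
          true_and] at hp
        simp only [hQB, Finset.mem_filter, Finset.mem_univ, true_and]
        intro d
        constructor
        · intro hd
          by_cases hde : d = e
          · subst hde
            simp only [Function.update_self]
            exact ⟨hp.1.1, by simp [hp.1.2, heA]⟩
          · rw [Function.update_of_ne hde]
            exact (hp.2 d).1 (Finset.mem_erase.mpr ⟨hde, hd⟩)
        · intro hd
          have hde : d ≠ e := fun h => hd (h ▸ heB)
          rw [Function.update_of_ne hde]
          exact (hp.2 d).2 (fun hdB' => hd (Finset.mem_of_mem_erase hdB'))
      · intro x hx
        simp only [hQB, Finset.mem_filter, Finset.mem_univ, true_and] at hx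
        funext d
        by_cases hde : d = e
        · subst hde; simp
        · simp [Function.update_of_ne hde]
      · intro p hp
        simp only [Finset.mem_product, hS, hQB', Finset.mem_filter, Finset.mem_univ,
          true_and] at hp
        have hp2e : p.2 e = 0 := (hp.2 e).2 heB'
        refine Prod.ext (by simp) ?_
        simp only
        funext d
        by_cases hde : d = e
        · subst hde; simp [hp2e]
        · simp [Function.update_of_ne hde]
      · intro x hx
        simp only [hQB, Finset.mem_filter, Finset.mem_univ, true_and] at hx
        congr 1
        funext d
        by_cases hde : d = e
        · subst hde; simp
        · simp [Function.update_of_ne hde]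
    have hsum2 : ∑ p ∈ S ×ˢ QB', f (Function.update p.2 e p.1)
        = ∑ y ∈ QB', ∑ c ∈ S, f (Function.update y e c) := by
      rw [Finset.sum_product]
      exact Finset.sum_comm
    have hk1 : (0 : ℝ) ≤ (k : ℝ) - 1 := by
      have : (3 : ℝ) ≤ (k : ℝ) := by exact_mod_cast hk
      linarith
    calc ((k : ℝ) - 1) ^ (m + 1) * f (restrict o A)
        = ((k : ℝ) - 1) * (((k : ℝ) - 1) ^ m * f (restrict o A)) := by ring
      _ ≤ ((k : ℝ) - 1) * ∑ y ∈ QB', f y :=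
          mul_le_mul_of_nonneg_left (ih B' hAB' hcard') hk1
      _ = ∑ y ∈ QB', ((k : ℝ) - 1) * f y := Finset.mul_sum _ _ _
      _ ≤ ∑ y ∈ QB', ∑ c ∈ S, f (Function.update y e c) := by
          apply Finset.sum_le_sum
          intro y hy
          simp only [hQB', Finset.mem_filter, Finset.mem_univ, true_and] at hy
          exact key_lemma hk f hsub y e ((hy e).2 heB') (o e) (ho e)
      _ = ∑ x ∈ QB, f x := by rw [hsum, hsum2]

theorem stmt_8 {U : Type*} [Fintype U] [DecidableEq U] {k : ℕ} (hk : 3 ≤ k)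
    (f : (U → Fin (k+1)) → ℝ) (hnn : ∀ s, 0 ≤ f s) (hsub : kSubmodular f)
    (o : U → Fin (k+1)) (ho : ∀ e, o e ≠ 0) (A : Finset U) :
    ((k : ℝ) - 1) ^ (Fintype.card U - A.card) * f (restrict o A) ≤
      ∑ x ∈ Finset.univ.filter
          (fun x : U → Fin (k+1) => ∀ e, x e ≠ 0 ∧ (x e = o e ↔ e ∈ A)), f x := by
  have hAcard : A.card ≤ Fintype.card U := A.card_le_univ
  have := main_lemma hk f hnn hsub o ho A (Fintype.card U - A.card) Finset.univ
    (Finset.subset_univ A) (by rw [Finset.card_univ]; omega)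
  convert this using 2
  apply Finset.filter_congr
  intro x _
  simp
end

section
/- Let k ≥ 3, let f : {0,...,k}^U → ℝ≥0 be k-submodular with |U| = n ≥ 1, and suppose f attains its maximum over all of {0,...,k}^U at an orthant o ∈ {1,...,k}^U. If x is chosen uniformly at random from the k^n orthants of U, then E[f(x)] ≥ (1/k)·f(o). -/
lemma pair_ineq {U : Type*} [DecidableEq U] {k : ℕ} (f : (U → Fin (k+1)) → ℝ)
    (hsub : kSubmodular f) (s : U → Fin (k+1)) (e : U) (hs : s e = 0)
    {a b : Fin (k+1)} (ha : a ≠ 0) (hb : b ≠ 0) (hab : a ≠ b) :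
    f s + f s ≤ f (Function.update s e a) + f (Function.update s e b) := by
  have h := hsub (Function.update s e a) (Function.update s e b)
  have h1 : (fun e' => min0 (Function.update s e a e') (Function.update s e b e')) = s := by
    funext e'
    by_cases he : e' = e
    · subst he; simp [min0, ha, hb, hab, hs]
    · simp [Function.update_of_ne he, min0]
  have h2 : (fun e' => max0 (Function.update s e a e') (Function.update s e b e')) = s := by
    funext e'
    by_cases he : e' = e
    · subst he; simp [max0, ha, hb, hab, hs]
    · simp [Function.update_of_ne he, max0]
  rw [h1, h2] at h
  exact h

lemma sum_upd_ge {U : Type*} [DecidableEq U] {k : ℕ} (f : (U → Fin (k+1)) → ℝ)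
    (hsub : kSubmodular f) (A : Finset (Fin (k+1))) (hA0 : ∀ a ∈ A, a ≠ 0)
    (hA2 : 2 ≤ A.card) (s : U → Fin (k+1)) (e : U) (hs : s e = 0) :
    (A.card : ℝ) * f s ≤ ∑ a ∈ A, f (Function.update s e a) := by
  have hcast : ((A.card - 1 : ℕ) : ℝ) = (A.card : ℝ) - 1 := by
    rw [Nat.cast_sub (by omega), Nat.cast_one]
  have hd : ∑ a ∈ A, ∑ b ∈ A.erase a, (f s + f s)
      ≤ ∑ a ∈ A, ∑ b ∈ A.erase a, (f (Function.update s e a) + f (Function.update s e b)) := by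
    refine Finset.sum_le_sum fun a ha => Finset.sum_le_sum fun b hb => ?_
    exact pair_ineq f hsub s e hs (hA0 a ha) (hA0 b (Finset.mem_of_mem_erase hb))
      (Ne.symm (Finset.ne_of_mem_erase hb))
  set T := ∑ a ∈ A, f (Function.update s e a) with hT
  have hL : ∑ a ∈ A, ∑ b ∈ A.erase a, (f s + f s)
      = (A.card : ℝ) * (((A.card : ℝ) - 1) * (f s + f s)) := by
    rw [Finset.sum_congr rfl (fun a ha => by
      rw [Finset.sum_const, Finset.card_erase_of_mem ha, nsmul_eq_mul, hcast])]
    rw [Finset.sum_const, nsmul_eq_mul]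
  have hR : ∑ a ∈ A, ∑ b ∈ A.erase a, (f (Function.update s e a) + f (Function.update s e b))
      = ((A.card : ℝ) - 1) * T + ((A.card : ℝ) * T - T) := by
    rw [Finset.sum_congr rfl (fun a ha => by
      rw [Finset.sum_add_distrib, Finset.sum_const, Finset.card_erase_of_mem ha,
        nsmul_eq_mul, hcast, Finset.sum_erase_eq_sub ha, ← hT])]
    rw [Finset.sum_add_distrib, Finset.sum_sub_distrib, ← Finset.mul_sum, ← hT,
      Finset.sum_const, nsmul_eq_mul]
  rw [hL, hR] at hd
  have hm : (2:ℝ) ≤ (A.card : ℝ) := by exact_mod_cast hA2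
  nlinarith [hd, hm]

def Fam {U : Type*} [Fintype U] [DecidableEq U] {k : ℕ} (S : Finset U)
    (b : U → Fin (k+1)) : Finset (U → Fin (k+1)) :=
  Finset.univ.filter (fun x => (∀ e ∈ S, x e ≠ 0) ∧ ∀ e ∉ S, x e = b e)

lemma mem_Fam {U : Type*} [Fintype U] [DecidableEq U] {k : ℕ} {S : Finset U}
    {b x : U → Fin (k+1)} :
    x ∈ Fam S b ↔ (∀ e ∈ S, x e ≠ 0) ∧ ∀ e ∉ S, x e = b e := by
  simp [Fam]

lemma exists_orthant_max {U : Type*} [Fintype U] [DecidableEq U] {k : ℕ} (hk : 3 ≤ k)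
    (f : (U → Fin (k+1)) → ℝ) (hsub : kSubmodular f) (S : Finset U) (b : U → Fin (k+1)) :
    ∃ og : U → Fin (k+1), (∀ e ∈ S, og e ≠ 0) ∧ (∀ e ∉ S, og e = b e) ∧
      ∀ s, (∀ e ∉ S, s e = b e) → f s ≤ f og := by
  have hne : (Fam S b).Nonempty := by
    refine ⟨fun e => if e ∈ S then (⟨1, by omega⟩ : Fin (k+1)) else b e, mem_Fam.2 ⟨?_, ?_⟩⟩
    · intro e he
      simp only [he, if_true]
      intro h
      simpa using congrArg Fin.val h
    · intro e he
      simp [he]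
  obtain ⟨og, hogF, hogmax⟩ := Finset.exists_max_image (Fam S b) f hne
  obtain ⟨hog1, hog2⟩ := mem_Fam.1 hogF
  refine ⟨og, hog1, hog2, ?_⟩
  have key : ∀ m : ℕ, ∀ s : U → Fin (k+1), (∀ e ∉ S, s e = b e) →
      (S.filter (fun e => s e = 0)).card ≤ m → f s ≤ f og := by
    intro m
    induction m with
    | zero =>
      intro s hsb hcard
      refine hogmax s (mem_Fam.2 ⟨?_, hsb⟩)
      intro e heS hz
      have : e ∈ S.filter (fun e => s e = 0) := Finset.mem_filter.2 ⟨heS, hz⟩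
      have := Finset.card_pos.2 ⟨e, this⟩
      omega
    | succ m ihm =>
      intro s hsb hcard
      by_cases hz : ∀ e ∈ S, s e ≠ 0
      · exact hogmax s (mem_Fam.2 ⟨hz, hsb⟩)
      · push_neg at hz
        obtain ⟨e, heS, hse⟩ := hz
        have ha1 : (⟨1, by omega⟩ : Fin (k+1)) ≠ 0 := by
          intro h; simpa using congrArg Fin.val h
        have ha2 : (⟨2, by omega⟩ : Fin (k+1)) ≠ 0 := by
          intro h; simpa using congrArg Fin.val h
        have ha12 : (⟨1, by omega⟩ : Fin (k+1)) ≠ (⟨2, by omega⟩ : Fin (k+1)) := by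
          intro h; simpa using congrArg Fin.val h
        have hp := pair_ineq f hsub s e hse ha1 ha2 ha12
        have hcard' : ∀ a : Fin (k+1), a ≠ 0 →
            (S.filter (fun e' => Function.update s e a e' = 0)).card ≤ m := by
          intro a ha
          have hsubset : S.filter (fun e' => Function.update s e a e' = 0)
              ⊆ (S.filter (fun e' => s e' = 0)).erase e := by
            intro e' he'
            rw [Finset.mem_filter] at he'
            rcases eq_or_ne e' e with rfl | hne
            · rw [Function.update_self] at he'
              exact absurd he'.2 ha
            · rw [Function.update_of_ne hne] at he'
              exact Finset.mem_erase.2 ⟨hne, Finset.mem_filter.2 he'⟩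
          have h1 := Finset.card_le_card hsubset
          have h2 : e ∈ S.filter (fun e' => s e' = 0) := Finset.mem_filter.2 ⟨heS, hse⟩
          rw [Finset.card_erase_of_mem h2] at h1
          omega
        have hupd : ∀ a : Fin (k+1), ∀ e' ∉ S, Function.update s e a e' = b e' := by
          intro a e' he'
          rw [Function.update_of_ne (by rintro rfl; exact he' heS)]
          exact hsb e' he'
        rcases le_or_gt (f s) (f (Function.update s e ⟨1, by omega⟩)) with h | h
        · exact h.trans (ihm _ (hupd _) (hcard' _ ha1))
        · have h' : f s ≤ f (Function.update s e ⟨2, by omega⟩) := by linarith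
          exact h'.trans (ihm _ (hupd _) (hcard' _ ha2))
  exact fun s hs => key _ s hs le_rfl


lemma main_ind {U : Type*} [Fintype U] [DecidableEq U] {k : ℕ} (hk : 3 ≤ k)
    (f : (U → Fin (k+1)) → ℝ) (hnn : ∀ s, 0 ≤ f s) (hsub : kSubmodular f)
    (S : Finset U) :
    ∀ o : U → Fin (k+1), (∀ e ∈ S, o e ≠ 0) → (∀ s, (∀ e ∉ S, s e = o e) → f s ≤ f o) →
      (k:ℝ)^S.card * (f o + ((k:ℝ)-1) * f (fun e => if e ∈ S then 0 else o e))
        ≤ (k:ℝ) * ∑ x ∈ Fam S o, f x := by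
  induction S using Finset.induction_on with
  | empty =>
    intro o ho hmax
    have h1 : Fam (∅ : Finset U) o = {o} := by
      ext x
      simp [mem_Fam, funext_iff]
    have h2 : (fun e => if e ∈ (∅ : Finset U) then 0 else o e) = o := by
      funext e; simp
    rw [h1, h2, Finset.sum_singleton, Finset.card_empty, pow_zero]
    have hK : (3:ℝ) ≤ (k:ℝ) := by exact_mod_cast hk
    nlinarith [hnn o]
  | @insert e S he ih =>
    intro o ho hmax
    have hK : (3:ℝ) ≤ (k:ℝ) := by exact_mod_cast hk
    have hK0 : (0:ℝ) ≤ (k:ℝ) := by linarith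
    have hK1 : (0:ℝ) ≤ (k:ℝ) - 1 := by linarith
    have hoe : o e ≠ 0 := ho e (Finset.mem_insert_self e S)
    set N : Finset (Fin (k+1)) := Finset.univ.filter (fun a => a ≠ 0) with hN
    have hNmem : ∀ a : Fin (k+1), a ∈ N ↔ a ≠ 0 := by simp [hN]
    have hNcard : N.card = k := by
      rw [hN, Finset.filter_ne', Finset.card_erase_of_mem (Finset.mem_univ _),
        Finset.card_univ, Fintype.card_fin]
      omega
    -- fiber decomposition
    have hfib : ∑ x ∈ Fam (insert e S) o, f x
        = ∑ a ∈ N, ∑ x ∈ (Fam (insert e S) o).filter (fun x => x e = a), f x := by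
      rw [Finset.sum_fiberwise_of_maps_to]
      intro x hx
      rw [hNmem]
      exact (mem_Fam.1 hx).1 e (Finset.mem_insert_self e S)
    have hfib2 : ∀ a : Fin (k+1), a ≠ 0 →
        (Fam (insert e S) o).filter (fun x => x e = a) = Fam S (Function.update o e a) := by
      intro a ha
      ext x
      simp only [Finset.mem_filter, mem_Fam]
      constructor
      · rintro ⟨⟨h1, h2⟩, h3⟩
        refine ⟨fun e' he' => h1 e' (Finset.mem_insert_of_mem he'), fun e' he' => ?_⟩
        rcases eq_or_ne e' e with rfl | hne
        · rw [Function.update_self]; exact h3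
        · rw [Function.update_of_ne hne]
          exact h2 e' (by simp [hne, he'])
      · rintro ⟨h1, h2⟩
        have h3 : x e = a := by
          have := h2 e he; rwa [Function.update_self] at this
        refine ⟨⟨?_, ?_⟩, h3⟩
        · intro e' he'
          rcases Finset.mem_insert.1 he' with rfl | he'S
          · rw [h3]; exact ha
          · exact h1 e' he'S
        · intro e' he'
          have he'e : e' ≠ e := fun h => he' (h ▸ Finset.mem_insert_self e S)
          have he'S : e' ∉ S := fun h => he' (Finset.mem_insert_of_mem h)
          have := h2 e' he'S
          rwa [Function.update_of_ne he'e] at this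
    -- split off a* = o e
    have hoeN : o e ∈ N := (hNmem _).2 hoe
    have hsplit : ∑ a ∈ N, ∑ x ∈ Fam S (Function.update o e a), f x
        = (∑ x ∈ Fam S o, f x)
          + ∑ a ∈ N.erase (o e), ∑ x ∈ Fam S (Function.update o e a), f x := by
      rw [← Finset.add_sum_erase N _ hoeN, Function.update_eq_self]
    -- the b0 family
    set b0 : U → Fin (k+1) := Function.update o e 0 with hb0
    have hb0e : b0 e = 0 := Function.update_self e 0 o
    -- bijection for a ≠ 0
    have hb0ne : ∀ e', e' ≠ e → b0 e' = o e' := fun e' h => Function.update_of_ne h 0 o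
    have hbij : ∀ a : Fin (k+1), a ≠ 0 →
        ∑ x ∈ Fam S (Function.update o e a), f x
          = ∑ y ∈ Fam S b0, f (Function.update y e a) := by
      intro a ha
      have key : ∀ x ∈ Fam S (Function.update o e a),
          Function.update (Function.update x e 0) e a = x := by
        intro x hx
        obtain ⟨h1, h2⟩ := mem_Fam.1 hx
        have hxe : x e = a := by
          have := h2 e he; rwa [Function.update_self] at this
        rw [Function.update_idem]
        exact Function.update_eq_self_iff.2 hxe.symm
      refine Finset.sum_nbij' (fun x => Function.update x e 0)
        (fun y => Function.update y e a) ?_ ?_ key ?_ ?_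
      · intro x hx
        obtain ⟨h1, h2⟩ := mem_Fam.1 hx
        refine mem_Fam.2 ⟨fun e' he' => ?_, fun e' he' => ?_⟩
        · show Function.update x e 0 e' ≠ 0
          have hne : e' ≠ e := by rintro rfl; exact he he'
          rw [Function.update_of_ne hne]
          exact h1 e' he'
        · show Function.update x e 0 e' = b0 e'
          rcases eq_or_ne e' e with rfl | hne
          · rw [Function.update_self, hb0e]
          · rw [Function.update_of_ne hne, hb0ne e' hne]
            have := h2 e' he'
            rwa [Function.update_of_ne hne] at this
      · intro y hy
        obtain ⟨h1, h2⟩ := mem_Fam.1 hy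
        refine mem_Fam.2 ⟨fun e' he' => ?_, fun e' he' => ?_⟩
        · show Function.update y e a e' ≠ 0
          have hne : e' ≠ e := by rintro rfl; exact he he'
          rw [Function.update_of_ne hne]
          exact h1 e' he'
        · show Function.update y e a e' = Function.update o e a e'
          rcases eq_or_ne e' e with rfl | hne
          · rw [Function.update_self, Function.update_self]
          · rw [Function.update_of_ne hne, Function.update_of_ne hne]
            exact (h2 e' he').trans (hb0ne e' hne)
      · intro y hy
        obtain ⟨h1, h2⟩ := mem_Fam.1 hy
        have hye : y e = 0 := by
          have := h2 e he; rwa [hb0e] at this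
        show Function.update (Function.update y e a) e 0 = y
        rw [Function.update_idem]
        exact Function.update_eq_self_iff.2 hye.symm
      · intro x hx
        exact (congrArg f (key x hx)).symm
    -- lower bound for sum over a ≠ o e
    have herase0 : ∀ a ∈ N.erase (o e), a ≠ 0 :=
      fun a ha => (hNmem _).1 (Finset.mem_of_mem_erase ha)
    have hercard : (N.erase (o e)).card = k - 1 := by
      rw [Finset.card_erase_of_mem hoeN, hNcard]
    have hercast : (((N.erase (o e)).card : ℕ) : ℝ) = (k:ℝ) - 1 := by
      rw [hercard, Nat.cast_sub (by omega), Nat.cast_one]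
    have hlow : ((k:ℝ) - 1) * ∑ y ∈ Fam S b0, f y
        ≤ ∑ a ∈ N.erase (o e), ∑ x ∈ Fam S (Function.update o e a), f x := by
      rw [Finset.sum_congr rfl (fun a ha => hbij a (herase0 a ha)), Finset.sum_comm,
        Finset.mul_sum]
      refine Finset.sum_le_sum fun y hy => ?_
      have hye : y e = 0 := by
        have := (mem_Fam.1 hy).2 e he; rwa [hb0e] at this
      have := sum_upd_ge f hsub (N.erase (o e)) herase0 (by omega) y e hye
      rwa [hercast] at this
    -- IH for o on S
    have ihA := ih o (fun e' he' => ho e' (Finset.mem_insert_of_mem he'))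
      (fun s hs => hmax s (fun e' he' => hs e' (fun h => he' (Finset.mem_insert_of_mem h))))
    -- IH for og on S
    obtain ⟨og, hog1, hog2, hog3⟩ := exists_orthant_max hk f hsub S b0
    have hFameq : Fam S og = Fam S b0 := by
      ext x
      simp only [mem_Fam]
      constructor
      · rintro ⟨h1, h2⟩
        exact ⟨h1, fun e' he' => (h2 e' he').trans (hog2 e' he')⟩
      · rintro ⟨h1, h2⟩
        exact ⟨h1, fun e' he' => (h2 e' he').trans (hog2 e' he').symm⟩
    have ihB := ih og hog1 (fun s hs => hog3 s
      (fun e' he' => (hs e' he').trans (hog2 e' he')))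
    rw [hFameq] at ihB
    -- identify restricted vectors
    set z0 : U → Fin (k+1) := fun e' => if e' ∈ insert e S then 0 else o e' with hz0
    set zS : U → Fin (k+1) := fun e' => if e' ∈ S then 0 else o e' with hzS
    have hzog : (fun e' => if e' ∈ S then 0 else og e') = z0 := by
      funext e'
      by_cases h1 : e' ∈ S
      · simp [h1, hz0, Finset.mem_insert_of_mem h1]
      · rw [if_neg h1, hog2 e' h1, hz0]
        rcases eq_or_ne e' e with rfl | hne
        · simp [hb0]
        · simp [hb0, Function.update_of_ne hne, hne, h1]
    rw [hzog] at ihB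
    -- cross inequality
    have hcross1 : f z0 + f o ≤ f b0 + f zS := by
      have h := hsub b0 zS
      have hmin : (fun e' => min0 (b0 e') (zS e')) = z0 := by
        funext e'
        rcases eq_or_ne e' e with rfl | hne
        · simp [hb0, hzS, hz0, he, min0, Fin.le_def]
        · by_cases h1 : e' ∈ S
          · have : o e' ≠ 0 := ho e' (Finset.mem_insert_of_mem h1)
            simp [hb0, Function.update_of_ne hne, hzS, h1, hz0,
              Finset.mem_insert_of_mem h1, min0, this, Fin.le_def]
          · simp [hb0, Function.update_of_ne hne, hzS, h1, hz0, Finset.mem_insert, hne, min0]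
      have hmax' : (fun e' => max0 (b0 e') (zS e')) = o := by
        funext e'
        rcases eq_or_ne e' e with rfl | hne
        · simp [hb0, hzS, he, max0, Fin.le_def]
        · by_cases h1 : e' ∈ S
          · simp [hb0, Function.update_of_ne hne, hzS, h1, max0, Fin.le_def]
          · simp [hb0, Function.update_of_ne hne, hzS, h1, max0]
      rw [hmin, hmax'] at h
      exact h
    have hcross2 : f b0 ≤ f og := hog3 b0 (fun e' _ => rfl)
    -- arithmetic
    have hA : (k:ℝ)^S.card * (f o + ((k:ℝ)-1) * f zS) ≤ (k:ℝ) * ∑ x ∈ Fam S o, f x := ihA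
    have hB : (k:ℝ)^S.card * (f og + ((k:ℝ)-1) * f z0) ≤ (k:ℝ) * ∑ x ∈ Fam S b0, f x := ihB
    have hcard : (insert e S).card = S.card + 1 := Finset.card_insert_of_notMem he
    rw [hcard, hfib, Finset.sum_congr rfl (fun a ha => by rw [hfib2 a ((hNmem a).1 ha)]),
      hsplit]
    set A' := ∑ x ∈ Fam S o, f x
    set B' := ∑ x ∈ Fam S b0, f x
    set E' := ∑ a ∈ N.erase (o e), ∑ x ∈ Fam S (Function.update o e a), f x
    have h2 : ((k:ℝ)-1) * ((k:ℝ)^S.card * (f og + ((k:ℝ)-1) * f z0))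
        ≤ ((k:ℝ)-1) * ((k:ℝ) * B') := mul_le_mul_of_nonneg_left hB hK1
    have h3 : (k:ℝ) * (((k:ℝ)-1) * B') ≤ (k:ℝ) * E' := mul_le_mul_of_nonneg_left hlow hK0
    have h4 : 0 ≤ (k:ℝ)^S.card * (((k:ℝ)-1) * ((f og + f zS) - (f z0 + f o))) := by
      refine mul_nonneg (pow_nonneg hK0 _) (mul_nonneg hK1 ?_)
      have : f z0 + f o ≤ f og + f zS := by linarith
      linarith
    rw [pow_succ]
    nlinarith [hA, h2, h3, h4]

theorem stmt_9 {U : Type*} [Fintype U] [DecidableEq U] {k : ℕ} (hk : 3 ≤ k)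
    (hn : 1 ≤ Fintype.card U)
    (f : (U → Fin (k+1)) → ℝ) (hnn : ∀ s, 0 ≤ f s) (hsub : kSubmodular f)
    (o : U → Fin (k+1)) (ho : ∀ e, o e ≠ 0)
    (hmax : ∀ s : U → Fin (k+1), f s ≤ f o) :
    (1 / k : ℝ) * f o ≤
      (1 / (k : ℝ) ^ (Fintype.card U)) *
        ∑ x ∈ Finset.univ.filter (fun x : U → Fin (k+1) => ∀ e, x e ≠ 0), f x := by
  have h := main_ind hk f hnn hsub Finset.univ o (fun e _ => ho e) (fun s _ => hmax s)
  have hfilter : Fam Finset.univ o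
      = Finset.univ.filter (fun x : U → Fin (k+1) => ∀ e, x e ≠ 0) := by
    ext x
    simp [mem_Fam]
  have hz : (fun e => if e ∈ (Finset.univ : Finset U) then 0 else o e)
      = (fun _ => (0 : Fin (k+1))) := by
    funext e; simp
  rw [hfilter, hz, Finset.card_univ] at h
  have hK3 : (3:ℝ) ≤ (k:ℝ) := by exact_mod_cast hk
  have hKpos : (0:ℝ) < (k:ℝ) := by linarith
  have hpow : (0:ℝ) < (k:ℝ) ^ (Fintype.card U) := pow_pos hKpos _
  rw [div_mul_eq_mul_div, div_mul_eq_mul_div, div_le_div_iff₀ hKpos hpow]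
  have hz0 := hnn (fun _ => (0 : Fin (k+1)))
  have hK1 : (0:ℝ) ≤ (k:ℝ) - 1 := by linarith
  nlinarith [h, mul_nonneg (mul_nonneg (le_of_lt hpow) hK1) hz0]
end

section
/- Let f : {0,1,2}^U → ℝ≥0 be a bisubmodular (2-submodular) function with |U| = n ≥ 1, attaining its maximum at an orthant o ∈ {1,2}^U. If x is chosen uniformly at random from the 2^n orthants of U, then E[f(x)] ≥ (1/4)·f(o). -/
/-- flip 1 and 2 -/
def fl (a : Fin 3) : Fin 3 := if a = 1 then 2 else if a = 2 then 1 else 0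

lemma min0_self (a : Fin 3) : min0 a a = a := by revert a; decide
lemma max0_self (a : Fin 3) : max0 a a = a := by revert a; decide
lemma min0_zero_right (a : Fin 3) : min0 a 0 = 0 := by revert a; decide
lemma min0_zero_left (a : Fin 3) : min0 0 a = 0 := by revert a; decide
lemma max0_zero_right (a : Fin 3) : max0 a 0 = a := by revert a; decide
lemma max0_zero_left (a : Fin 3) : max0 0 a = a := by revert a; decide
lemma min0_fl (a : Fin 3) (h : a ≠ 0) : min0 a (fl a) = 0 := by revert a; decide
lemma max0_fl (a : Fin 3) (h : a ≠ 0) : max0 a (fl a) = 0 := by revert a; decide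
lemma fl_fl (a : Fin 3) : fl (fl a) = a := by revert a; decide
lemma fl_ne_zero (a : Fin 3) (h : a ≠ 0) : fl a ≠ 0 := by revert a; decide
lemma fl_ne_self (a : Fin 3) (h : a ≠ 0) : fl a ≠ a := by revert a; decide
lemma eq_or_eq_fl (a c : Fin 3) (ha : a ≠ 0) (hc : c ≠ 0) : a = c ∨ a = fl c := by
  revert a c; decide

/-- merge: x on T, background b elsewhere. -/
def mrg {U : Type*} [DecidableEq U] (T : Finset U) (x b : U → Fin 3) : U → Fin 3 :=
  fun e => if e ∈ T then x e else b e

/-- x on T, value v at u, background b elsewhere. -/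
def vtx {U : Type*} [DecidableEq U] (T : Finset U) (u : U) (x : U → Fin 3) (v : Fin 3)
    (b : U → Fin 3) : U → Fin 3 :=
  fun e => if e ∈ T then x e else if e = u then v else b e

lemma mrg_update {U : Type*} [DecidableEq U] (T : Finset U) (u : U) (x b : U → Fin 3)
    (v : Fin 3) : mrg T x (Function.update b u v) = vtx T u x v b := by
  funext e
  by_cases h1 : e ∈ T <;> by_cases h2 : e = u <;>
    simp [mrg, vtx, h1, h2, Function.update]

lemma mrg_insert {U : Type*} [DecidableEq U] (T : Finset U) (u : U) (x b : U → Fin 3) :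
    mrg (insert u T) x b = vtx T u x (x u) b := by
  funext e
  by_cases h1 : e ∈ T <;> by_cases h2 : e = u <;>
    simp [mrg, vtx, Finset.mem_insert, h1, h2]

lemma vtx_comb {U : Type*} [DecidableEq U] (g : Fin 3 → Fin 3 → Fin 3) (T : Finset U) (u : U)
    (x₁ x₂ x₃ : U → Fin 3) (v₁ v₂ v₃ : Fin 3) (b : U → Fin 3)
    (h1 : ∀ e ∈ T, g (x₁ e) (x₂ e) = x₃ e) (h2 : g v₁ v₂ = v₃) (h3 : ∀ a : Fin 3, g a a = a) :
    (fun e => g (vtx T u x₁ v₁ b e) (vtx T u x₂ v₂ b e)) = vtx T u x₃ v₃ b := by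
  funext e
  by_cases hT : e ∈ T
  · simp [vtx, hT, h1 e hT]
  · by_cases he : e = u
    · subst he; simp [vtx, hT, h2]
    · simp [vtx, hT, he, h3]

lemma key_lemma_s10 {U : Type*} [Fintype U] [DecidableEq U]
    (f : (U → Fin 3) → ℝ) (hsub : kSubmodular f) :
    ∀ T : Finset U, ∀ b o : U → Fin 3, (∀ e, o e ≠ 0) →
      (2:ℝ) ^ T.card *
        (f (mrg T o b) + f (mrg T (fun e => fl (o e)) b) + 2 * f (mrg T (fun _ => 0) b)) ≤
      4 * ∑ x ∈ Finset.univ.filter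
            (fun x : U → Fin 3 => (∀ e ∈ T, x e ≠ 0) ∧ ∀ e ∉ T, x e = b e), f x := by
  intro T
  induction T using Finset.induction_on with
  | empty =>
    intro b o ho
    have h1 : ∀ x : U → Fin 3, mrg (∅ : Finset U) x b = b := by
      intro x; funext e; simp [mrg]
    have h2 : Finset.univ.filter
        (fun x : U → Fin 3 =>
          (∀ e ∈ (∅ : Finset U), x e ≠ 0) ∧ ∀ e ∉ (∅ : Finset U), x e = b e) = {b} := by
      ext x
      simp only [Finset.mem_filter, Finset.mem_univ, true_and, Finset.mem_singleton]
      constructor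
      · intro h
        funext e
        exact h.2 e (Finset.notMem_empty e)
      · rintro rfl
        exact ⟨fun e he => absurd he (Finset.notMem_empty e), fun e _ => rfl⟩
    rw [h1, h1, h1, h2, Finset.sum_singleton, Finset.card_empty]
    norm_num
    linarith [le_refl (f b)]
  | @insert u T hu ih =>
    intro b o ho
    -- split the sum according to the value at u
    have hQ1sub : ∀ x : U → Fin 3,
        ((∀ e ∈ T, x e ≠ 0) ∧ ∀ e ∉ T, x e = Function.update b u (o u) e) →
        ((∀ e ∈ insert u T, x e ≠ 0) ∧ ∀ e ∉ insert u T, x e = b e) := by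
      intro x ⟨h1, h2⟩
      constructor
      · intro e he
        rcases Finset.mem_insert.mp he with rfl | heT
        · have := h2 e hu
          rw [Function.update_self] at this
          rw [this]; exact ho e
        · exact h1 e heT
      · intro e he
        have hne : e ≠ u := fun h => he (h ▸ Finset.mem_insert_self u T)
        have heT : e ∉ T := fun h => he (Finset.mem_insert_of_mem h)
        have := h2 e heT
        rwa [Function.update_of_ne hne] at this
    have hQ2sub : ∀ x : U → Fin 3,
        ((∀ e ∈ T, x e ≠ 0) ∧ ∀ e ∉ T, x e = Function.update b u (fl (o u)) e) →
        ((∀ e ∈ insert u T, x e ≠ 0) ∧ ∀ e ∉ insert u T, x e = b e) := by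
      intro x ⟨h1, h2⟩
      constructor
      · intro e he
        rcases Finset.mem_insert.mp he with rfl | heT
        · have := h2 e hu
          rw [Function.update_self] at this
          rw [this]; exact fl_ne_zero _ (ho e)
        · exact h1 e heT
      · intro e he
        have hne : e ≠ u := fun h => he (h ▸ Finset.mem_insert_self u T)
        have heT : e ∉ T := fun h => he (Finset.mem_insert_of_mem h)
        have := h2 e heT
        rwa [Function.update_of_ne hne] at this
    have hunion : Finset.univ.filter
          (fun x : U → Fin 3 => (∀ e ∈ insert u T, x e ≠ 0) ∧ ∀ e ∉ insert u T, x e = b e)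
        = Finset.univ.filter
            (fun x : U → Fin 3 =>
              (∀ e ∈ T, x e ≠ 0) ∧ ∀ e ∉ T, x e = Function.update b u (o u) e)
          ∪ Finset.univ.filter
            (fun x : U → Fin 3 =>
              (∀ e ∈ T, x e ≠ 0) ∧ ∀ e ∉ T, x e = Function.update b u (fl (o u)) e) := by
      ext x
      simp only [Finset.mem_filter, Finset.mem_univ, true_and, Finset.mem_union]
      constructor
      · rintro ⟨h1, h2⟩
        have hxu : x u ≠ 0 := h1 u (Finset.mem_insert_self u T)
        have hT1 : ∀ e ∈ T, x e ≠ 0 := fun e he => h1 e (Finset.mem_insert_of_mem he)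
        have hoff : ∀ v : Fin 3, x u = v → ∀ e ∉ T, x e = Function.update b u v e := by
          intro v hv e heT
          by_cases hne : e = u
          · subst hne; rw [Function.update_self]; exact hv
          · rw [Function.update_of_ne hne]
            exact h2 e (by simp [Finset.mem_insert, hne, heT])
        rcases eq_or_eq_fl (x u) (o u) hxu (ho u) with hv | hv
        · exact Or.inl ⟨hT1, hoff _ hv⟩
        · exact Or.inr ⟨hT1, hoff _ hv⟩
      · rintro (h | h)
        · exact hQ1sub x h
        · exact hQ2sub x h
    have hdisj : Disjoint
        (Finset.univ.filter
          (fun x : U → Fin 3 =>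
            (∀ e ∈ T, x e ≠ 0) ∧ ∀ e ∉ T, x e = Function.update b u (o u) e))
        (Finset.univ.filter
          (fun x : U → Fin 3 =>
            (∀ e ∈ T, x e ≠ 0) ∧ ∀ e ∉ T, x e = Function.update b u (fl (o u)) e)) := by
      rw [Finset.disjoint_left]
      intro x hx1 hx2
      simp only [Finset.mem_filter, Finset.mem_univ, true_and] at hx1 hx2
      have e1 := hx1.2 u hu
      have e2 := hx2.2 u hu
      rw [Function.update_self] at e1
      rw [Function.update_self] at e2
      exact fl_ne_self (o u) (ho u) (by rw [← e2, ← e1])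
    rw [hunion, Finset.sum_union hdisj]
    -- rewrite the goal's vectors into vtx form
    rw [Finset.card_insert_of_notMem hu, mrg_insert, mrg_insert, mrg_insert]
    -- the two induction hypotheses
    have ih1 := ih (Function.update b u (o u)) o ho
    rw [mrg_update, mrg_update, mrg_update] at ih1
    have ih2 := ih (Function.update b u (fl (o u))) (fun e => fl (o e))
      (fun e => fl_ne_zero _ (ho e))
    have hflfl : (fun e => fl (fl (o e))) = o := by funext e; exact fl_fl (o e)
    rw [hflfl] at ih2
    rw [mrg_update, mrg_update, mrg_update] at ih2
    -- the four bisubmodular inequalities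
    have A1 := hsub (vtx T u o 0 b) (vtx T u (fun _ => 0) (o u) b)
    rw [vtx_comb min0 T u o (fun _ => 0) (fun _ => 0) 0 (o u) 0 b
        (fun e _ => min0_zero_right (o e)) (min0_zero_left (o u)) min0_self,
      vtx_comb max0 T u o (fun _ => 0) o 0 (o u) (o u) b
        (fun e _ => max0_zero_right (o e)) (max0_zero_left (o u)) max0_self] at A1
    have A2 := hsub (vtx T u (fun e => fl (o e)) 0 b) (vtx T u (fun _ => 0) (fl (o u)) b)
    rw [vtx_comb min0 T u (fun e => fl (o e)) (fun _ => 0) (fun _ => 0) 0 (fl (o u)) 0 b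
        (fun e _ => min0_zero_right (fl (o e))) (min0_zero_left (fl (o u))) min0_self,
      vtx_comb max0 T u (fun e => fl (o e)) (fun _ => 0) (fun e => fl (o e)) 0 (fl (o u))
        (fl (o u)) b
        (fun e _ => max0_zero_right (fl (o e))) (max0_zero_left (fl (o u))) max0_self] at A2
    have A3 := hsub (vtx T u (fun _ => 0) (o u) b) (vtx T u o (fl (o u)) b)
    rw [vtx_comb min0 T u (fun _ => 0) o (fun _ => 0) (o u) (fl (o u)) 0 b
        (fun e _ => min0_zero_left (o e)) (min0_fl (o u) (ho u)) min0_self,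
      vtx_comb max0 T u (fun _ => 0) o o (o u) (fl (o u)) 0 b
        (fun e _ => max0_zero_left (o e)) (max0_fl (o u) (ho u)) max0_self] at A3
    have A4 := hsub (vtx T u (fun e => fl (o e)) (o u) b) (vtx T u (fun e => fl (o e)) (fl (o u)) b)
    rw [vtx_comb min0 T u (fun e => fl (o e)) (fun e => fl (o e)) (fun e => fl (o e)) (o u)
        (fl (o u)) 0 b
        (fun e _ => min0_self (fl (o e))) (min0_fl (o u) (ho u)) min0_self,
      vtx_comb max0 T u (fun e => fl (o e)) (fun e => fl (o e)) (fun e => fl (o e)) (o u)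
        (fl (o u)) 0 b
        (fun e _ => max0_self (fl (o e))) (max0_fl (o u) (ho u)) max0_self] at A4
    -- put everything together
    have hK : (0:ℝ) ≤ 2 ^ T.card := by positivity
    have hstar : f (vtx T u o (o u) b) + f (vtx T u (fun e => fl (o e)) (fl (o u)) b)
        + 4 * f (vtx T u (fun _ => 0) 0 b)
        ≤ f (vtx T u (fun e => fl (o e)) (o u) b) + f (vtx T u o (fl (o u)) b)
          + 2 * f (vtx T u (fun _ => 0) (o u) b) + 2 * f (vtx T u (fun _ => 0) (fl (o u)) b) := by
      linarith [A1, A2, A3, A4]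
    have hmul : (2:ℝ) ^ (T.card + 1) *
        (f (vtx T u o (o u) b) + f (vtx T u (fun e => fl (o e)) (fl (o u)) b)
          + 2 * f (vtx T u (fun _ => 0) 0 b))
        ≤ (2:ℝ) ^ T.card *
          ((f (vtx T u o (o u) b) + f (vtx T u (fun e => fl (o e)) (o u) b)
              + 2 * f (vtx T u (fun _ => 0) (o u) b))
            + (f (vtx T u (fun e => fl (o e)) (fl (o u)) b) + f (vtx T u o (fl (o u)) b)
              + 2 * f (vtx T u (fun _ => 0) (fl (o u)) b))) := by
      rw [pow_succ]
      have := mul_le_mul_of_nonneg_left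
        (by linarith :
          2 * (f (vtx T u o (o u) b) + f (vtx T u (fun e => fl (o e)) (fl (o u)) b)
            + 2 * f (vtx T u (fun _ => 0) 0 b))
          ≤ (f (vtx T u o (o u) b) + f (vtx T u (fun e => fl (o e)) (o u) b)
              + 2 * f (vtx T u (fun _ => 0) (o u) b))
            + (f (vtx T u (fun e => fl (o e)) (fl (o u)) b) + f (vtx T u o (fl (o u)) b)
              + 2 * f (vtx T u (fun _ => 0) (fl (o u)) b))) hK
      linarith
    calc (2:ℝ) ^ (T.card + 1) *
        (f (vtx T u o (o u) b) + f (vtx T u (fun e => fl (o e)) (fl (o u)) b)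
          + 2 * f (vtx T u (fun _ => 0) 0 b))
        ≤ (2:ℝ) ^ T.card *
          ((f (vtx T u o (o u) b) + f (vtx T u (fun e => fl (o e)) (o u) b)
              + 2 * f (vtx T u (fun _ => 0) (o u) b))
            + (f (vtx T u (fun e => fl (o e)) (fl (o u)) b) + f (vtx T u o (fl (o u)) b)
              + 2 * f (vtx T u (fun _ => 0) (fl (o u)) b))) := hmul
      _ ≤ 4 * ∑ x ∈ Finset.univ.filter
            (fun x : U → Fin 3 =>
              (∀ e ∈ T, x e ≠ 0) ∧ ∀ e ∉ T, x e = Function.update b u (o u) e), f x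
          + 4 * ∑ x ∈ Finset.univ.filter
            (fun x : U → Fin 3 =>
              (∀ e ∈ T, x e ≠ 0) ∧ ∀ e ∉ T, x e = Function.update b u (fl (o u)) e), f x := by
          rw [mul_add]
          exact add_le_add ih1 ih2
      _ = 4 * (∑ x ∈ Finset.univ.filter
            (fun x : U → Fin 3 =>
              (∀ e ∈ T, x e ≠ 0) ∧ ∀ e ∉ T, x e = Function.update b u (o u) e), f x
          + ∑ x ∈ Finset.univ.filter
            (fun x : U → Fin 3 =>
              (∀ e ∈ T, x e ≠ 0) ∧ ∀ e ∉ T, x e = Function.update b u (fl (o u)) e), f x) := by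
          ring

theorem stmt_10 {U : Type*} [Fintype U] [DecidableEq U]
    (hn : 1 ≤ Fintype.card U)
    (f : (U → Fin 3) → ℝ) (hnn : ∀ s, 0 ≤ f s) (hsub : kSubmodular f)
    (o : U → Fin 3) (ho : ∀ e, o e ≠ 0)
    (hmax : ∀ s : U → Fin 3, f s ≤ f o) :
    (1 / 4 : ℝ) * f o ≤
      (1 / (2 : ℝ) ^ (Fintype.card U)) *
        ∑ x ∈ Finset.univ.filter (fun x : U → Fin 3 => ∀ e, x e ≠ 0), f x := by
  have hkey := key_lemma_s10 f hsub Finset.univ (fun _ => 0) o ho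
  have e1 : ∀ x : U → Fin 3, mrg Finset.univ x (fun _ => 0) = x := by
    intro x; funext e; simp [mrg]
  have e4 : Finset.univ.filter
      (fun x : U → Fin 3 =>
        (∀ e ∈ Finset.univ, x e ≠ 0) ∧ ∀ e ∉ Finset.univ, x e = (fun _ => (0:Fin 3)) e)
      = Finset.univ.filter (fun x : U → Fin 3 => ∀ e, x e ≠ 0) := by
    ext x
    simp
  rw [e1, e1, e1, e4, Finset.card_univ] at hkey
  have h2n : (0:ℝ) < 2 ^ Fintype.card U := by positivity
  have hfo : (2:ℝ) ^ Fintype.card U * f o ≤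
      4 * ∑ x ∈ Finset.univ.filter (fun x : U → Fin 3 => ∀ e, x e ≠ 0), f x := by
    refine le_trans ?_ hkey
    have h1 := hnn (fun e => fl (o e))
    have h2 := hnn (fun _ => 0)
    nlinarith [h2n.le]
  rw [one_div, one_div, inv_mul_eq_div, inv_mul_eq_div,
    div_le_div_iff₀ (by norm_num : (0:ℝ) < 4) h2n]
  linarith [hfo]
end

section
/- Let k ≥ 2 and let y_1,...,y_k ≥ 0 be reals, let p ≠ ℓ be indices in {1,...,k}, and let α = √(k/2). Then 2·y_ℓ·y_p + ∑_{i ≠ p, ℓ} (y_ℓ·y_i + y_p·y_i − y_i²) ≤ α·∑_{i=1}^k y_i². -/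
theorem stmt_13 {k : ℕ} (hk : 2 ≤ k) (y : Fin k → ℝ) (hy : ∀ i, 0 ≤ y i)
    (p ℓ : Fin k) (hpl : p ≠ ℓ) :
    2 * y ℓ * y p + ∑ i ∈ Finset.univ \ {p, ℓ}, (y ℓ * y i + y p * y i - y i ^ 2) ≤
      Real.sqrt (k / 2) * ∑ i, y i ^ 2 := by
  set α := Real.sqrt (k / 2) with hα
  have hk2 : (2 : ℝ) ≤ (k : ℝ) := by exact_mod_cast hk
  have hα1 : 1 ≤ α := by
    rw [hα, show (1:ℝ) = Real.sqrt 1 by simp]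
    exact Real.sqrt_le_sqrt (by linarith)
  have hαsq : α ^ 2 = (k : ℝ) / 2 := Real.sq_sqrt (by linarith)
  have hcard : ({p, ℓ} : Finset (Fin k)).card = 2 := by
    rw [Finset.card_insert_of_notMem (by simp [hpl]), Finset.card_singleton]
  have hcardS : (Finset.univ \ ({p, ℓ} : Finset (Fin k))).card = k - 2 := by
    rw [Finset.card_sdiff_of_subset (Finset.subset_univ _), hcard, Finset.card_univ, Fintype.card_fin]
  have hsplit : ∑ i, y i ^ 2 =
      (∑ i ∈ Finset.univ \ ({p, ℓ} : Finset (Fin k)), y i ^ 2) + (y p ^ 2 + y ℓ ^ 2) := by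
    rw [← Finset.sum_sdiff (Finset.subset_univ ({p, ℓ} : Finset (Fin k)))
      (f := fun i => y i ^ 2), Finset.sum_pair hpl]
  rcases eq_or_lt_of_le hk with heq | hk3
  · have hS : Finset.univ \ ({p, ℓ} : Finset (Fin k)) = ∅ := by
      rw [← Finset.card_eq_zero, hcardS, ← heq]
    rw [hS] at hsplit ⊢
    simp only [Finset.sum_empty] at hsplit ⊢
    rw [hsplit]
    nlinarith [sq_nonneg (y ℓ - y p), hy p, hy ℓ, sq_nonneg (y p), sq_nonneg (y ℓ)]
  · have hk3' : (3 : ℝ) ≤ (k : ℝ) := by exact_mod_cast hk3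
    have hkm2 : (0 : ℝ) < (k : ℝ) - 2 := by linarith
    set c : ℝ := (α - 1) / ((k : ℝ) - 2) with hc
    set d : ℝ := (α + 1) / 2 with hd
    have hcnn : 0 ≤ c := div_nonneg (by linarith) (by linarith)
    have hdnn : 0 ≤ d := by rw [hd]; linarith
    have h4cd : 4 * c * d = 1 := by
      rw [hc, hd]
      field_simp
      nlinarith [hαsq]
    have key : ∀ i ∈ Finset.univ \ ({p, ℓ} : Finset (Fin k)),
        y ℓ * y i + y p * y i - y i ^ 2 ≤ c * (y ℓ ^ 2 + y p ^ 2) + α * y i ^ 2 := by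
      intro i _
      have h1 : 0 ≤ d * (2 * c * y ℓ - y i) ^ 2 := mul_nonneg hdnn (sq_nonneg _)
      have h2 : 0 ≤ d * (2 * c * y p - y i) ^ 2 := mul_nonneg hdnn (sq_nonneg _)
      have e1 : 0 ≤ c * y ℓ ^ 2 - y ℓ * y i + d * y i ^ 2 := by
        have hid : c * y ℓ ^ 2 - y ℓ * y i + d * y i ^ 2 =
            d * (2 * c * y ℓ - y i) ^ 2 + (1 - 4 * c * d) * (c * y ℓ ^ 2 - y ℓ * y i) := by
          ring
        rw [hid, h4cd]
        simpa using h1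
      have e2 : 0 ≤ c * y p ^ 2 - y p * y i + d * y i ^ 2 := by
        have hid : c * y p ^ 2 - y p * y i + d * y i ^ 2 =
            d * (2 * c * y p - y i) ^ 2 + (1 - 4 * c * d) * (c * y p ^ 2 - y p * y i) := by
          ring
        rw [hid, h4cd]
        simpa using h2
      have hd2 : 2 * d = α + 1 := by rw [hd]; ring
      nlinarith [e1, e2, hd2]
    have hsum := Finset.sum_le_sum key
    have hconst : ∑ _i ∈ Finset.univ \ ({p, ℓ} : Finset (Fin k)), c * (y ℓ ^ 2 + y p ^ 2)
        = ((k : ℝ) - 2) * (c * (y ℓ ^ 2 + y p ^ 2)) := by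
      rw [Finset.sum_const, hcardS, nsmul_eq_mul]
      congr 1
      push_cast [Nat.cast_sub hk]
      ring
    have hcm : ((k : ℝ) - 2) * c = α - 1 := by
      rw [hc]; field_simp
    rw [Finset.sum_add_distrib, hconst, ← Finset.mul_sum] at hsum
    rw [hsplit]
    set B := ∑ i ∈ Finset.univ \ ({p, ℓ} : Finset (Fin k)), y i ^ 2 with hB
    have hfin : ((k : ℝ) - 2) * (c * (y ℓ ^ 2 + y p ^ 2)) = (α - 1) * (y ℓ ^ 2 + y p ^ 2) := by
      rw [← hcm]; ring
    nlinarith [hsum, sq_nonneg (y ℓ - y p), hfin]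
end

section
/- Let k ≥ 2, let y_1,...,y_k ≥ 0 and a_1,...,a_k be reals with a_i ≤ y_i for all i and ∑_{i∈I} a_i ≥ 0 for every subset I ⊆ {1,...,k} of size k, i.e., ∑_i a_i ≥ 0 (k-wise monotonicity constraints with r = k). Then for any p ∈ {1,...,k}, ∑_{i ≠ p} y_i·(a_p − a_i) ≤ √(k/2) · ∑_{i=1}^k y_i². -/
private lemma stmt_14_aux (c u m R P : ℝ) (hu : 0 ≤ u) (hm : 0 ≤ m) (hR : 0 ≤ R)
    (hP : 0 ≤ P) (hc : 1 ≤ c) (hCS : R ^ 2 ≤ (2 * c ^ 2 - 2) * P) :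
    u * (m + R) + m * (m + R) + m * u - (m ^ 2 + P) ≤ c * (u ^ 2 + (m ^ 2 + P)) := by
  rcases eq_or_lt_of_le hc with h | h
  · -- c = 1
    have hc1 : c = 1 := h.symm
    subst hc1
    have hR2 : R ^ 2 = 0 := le_antisymm (by nlinarith) (sq_nonneg R)
    have hRz : R = 0 := by
      have := sq_eq_zero_iff.mp hR2
      exact this
    subst hRz
    nlinarith [sq_nonneg (u - m)]
  · have h2 : 0 < 2 * (c - 1) := by linarith
    have key : 2 * (c - 1) * (c * u ^ 2 + c * m ^ 2 + (c + 1) * P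
        - (2 * u * m + u * R + m * R))
        = (c ^ 2 - 1) * (u - m) ^ 2 + ((c - 1) * (u + m) - R) ^ 2
          + ((2 * c ^ 2 - 2) * P - R ^ 2) := by ring
    have e1 : 0 ≤ (c ^ 2 - 1) * (u - m) ^ 2 :=
      mul_nonneg (by nlinarith) (sq_nonneg _)
    have e2 : 0 ≤ ((c - 1) * (u + m) - R) ^ 2 := sq_nonneg _
    have e3 : 0 ≤ (2 * c ^ 2 - 2) * P - R ^ 2 := by linarith
    have h3 : 0 ≤ 2 * (c - 1) * (c * u ^ 2 + c * m ^ 2 + (c + 1) * P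
        - (2 * u * m + u * R + m * R)) := by rw [key]; linarith
    have h4 : 0 ≤ c * u ^ 2 + c * m ^ 2 + (c + 1) * P
        - (2 * u * m + u * R + m * R) := (mul_nonneg_iff_of_pos_left h2).mp h3
    nlinarith [h4]

theorem stmt_14 {k : ℕ} (hk : 2 ≤ k) (y a : Fin k → ℝ) (hy : ∀ i, 0 ≤ y i)
    (hay : ∀ i, a i ≤ y i) (hsum : 0 ≤ ∑ i, a i) (p : Fin k) :
    ∑ i ∈ Finset.univ \ {p}, y i * (a p - a i) ≤ Real.sqrt (k / 2) * ∑ i, y i ^ 2 := by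
  have : Nontrivial (Fin k) := Fin.nontrivial_iff_two_le.mpr hk
  set D : Finset (Fin k) := Finset.univ \ {p} with hD
  obtain ⟨q, hq⟩ := exists_ne p
  have hDne : D.Nonempty := ⟨q, by simp [hD, hq]⟩
  obtain ⟨ℓ, hℓD, hmax⟩ := Finset.exists_max_image D y hDne
  set c : ℝ := Real.sqrt (k / 2) with hc
  set S : ℝ := ∑ i ∈ D, y i with hS
  set Q : ℝ := ∑ i ∈ D, y i ^ 2 with hQ
  set m : ℝ := y ℓ with hm
  have hm0 : 0 ≤ m := hy ℓ
  have hS0 : 0 ≤ S := Finset.sum_nonneg fun i _ => hy i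
  have hQ0 : 0 ≤ Q := Finset.sum_nonneg fun i _ => sq_nonneg _
  -- sum over D of a
  have hsumD : ∑ i ∈ D, a i = (∑ i, a i) - a p := by
    rw [hD, Finset.sum_sdiff_eq_sub (Finset.subset_univ _), Finset.sum_singleton]
  -- Step A: LHS ≤ y p * S + m * S + m * y p - Q
  have hT : Q - m * S - m * y p ≤ ∑ i ∈ D, y i * a i := by
    have h1 : ∑ i ∈ D, ((y i - m) * y i + m * a i) ≤ ∑ i ∈ D, y i * a i := by
      refine Finset.sum_le_sum fun i hi => ?_
      nlinarith [hmax i hi, hay i]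
    have h2 : ∑ i ∈ D, ((y i - m) * y i + m * a i)
        = Q - m * S + m * ((∑ i, a i) - a p) := by
      rw [Finset.sum_add_distrib, ← Finset.mul_sum, hsumD]
      have : ∑ i ∈ D, (y i - m) * y i = Q - m * S := by
        rw [hQ, hS, Finset.mul_sum, ← Finset.sum_sub_distrib]
        exact Finset.sum_congr rfl fun i _ => by ring
      rw [this]
    have h3 : -(y p) ≤ (∑ i, a i) - a p := by
      have := hay p; linarith
    nlinarith [mul_le_mul_of_nonneg_left h3 hm0]
  have hA : ∑ i ∈ D, y i * (a p - a i) ≤ y p * S + m * S + m * y p - Q := by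
    have hlhs : ∑ i ∈ D, y i * (a p - a i) = S * a p - ∑ i ∈ D, y i * a i := by
      rw [hS, Finset.sum_mul, ← Finset.sum_sub_distrib]
      exact Finset.sum_congr rfl fun i _ => by ring
    have hap : S * a p ≤ S * y p := mul_le_mul_of_nonneg_left (hay p) hS0
    rw [hlhs]; linarith
  -- Step B setup
  set D' : Finset (Fin k) := D \ {ℓ} with hD'
  set R : ℝ := ∑ i ∈ D', y i with hR
  set P : ℝ := ∑ i ∈ D', y i ^ 2 with hP
  have hR0 : 0 ≤ R := Finset.sum_nonneg fun i _ => hy i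
  have hP0 : 0 ≤ P := Finset.sum_nonneg fun i _ => sq_nonneg _
  have hSm : S = m + R := by
    rw [hS, hR, hD', Finset.sum_sdiff_eq_sub (Finset.singleton_subset_iff.mpr hℓD),
      Finset.sum_singleton]; ring
  have hQm : Q = m ^ 2 + P := by
    rw [hQ, hP, hD', Finset.sum_sdiff_eq_sub (Finset.singleton_subset_iff.mpr hℓD),
      Finset.sum_singleton]; ring
  have hcardD' : (D'.card : ℝ) = (k : ℝ) - 2 := by
    have h1 : D.card = k - 1 := by
      rw [hD, Finset.card_sdiff_of_subset (by simp), Finset.card_singleton, Finset.card_univ,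
        Fintype.card_fin]
    have h2 : D'.card = k - 2 := by
      rw [hD', Finset.card_sdiff_of_subset (Finset.singleton_subset_iff.mpr hℓD),
        Finset.card_singleton, h1]
      omega
    rw [h2, Nat.cast_sub hk]
    norm_num
  have hc2 : c ^ 2 = (k : ℝ) / 2 := Real.sq_sqrt (by positivity)
  have hc1 : 1 ≤ c := by
    rw [hc, show (1 : ℝ) = Real.sqrt 1 from (Real.sqrt_one).symm]
    apply Real.sqrt_le_sqrt
    have : (2 : ℝ) ≤ (k : ℝ) := by exact_mod_cast hk
    linarith
  have hCS : R ^ 2 ≤ (2 * c ^ 2 - 2) * P := by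
    have h0 : R ^ 2 ≤ ((k : ℝ) - 2) * P := by
      rw [← hcardD', hR, hP]
      exact sq_sum_le_card_mul_sum_sq
    have : (2 : ℝ) * c ^ 2 - 2 = (k : ℝ) - 2 := by rw [hc2]; ring
    rw [this]; exact h0
  have hB : y p * S + m * S + m * y p - Q ≤ c * (y p ^ 2 + Q) := by
    rw [hSm, hQm]
    exact stmt_14_aux c (y p) m R P (hy p) hm0 hR0 hP0 hc1 hCS
  -- combine
  have hsplit : ∑ i, y i ^ 2 = y p ^ 2 + Q := by
    rw [hQ, hD, Finset.sum_sdiff_eq_sub (Finset.subset_univ _), Finset.sum_singleton]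
    ring
  rw [hsplit]
  linarith
end

section
/- Let k ≥ 2, let y_1,...,y_k ≥ 0 and a_1,...,a_k be reals with a_i ≤ y_i for all i and a_i + a_j ≥ 0 for all i ≠ j (pairwise monotonicity constraints). Then for any p ∈ {1,...,k}, ∑_{i ≠ p} y_i·(a_p − a_i) ≤ max(1, √((k−1)/4)) · ∑_{i=1}^k y_i². -/
private lemma keyA (c u T Q m : ℝ) (hc1 : 1 ≤ c) (hm : m ≤ 4*c^2) (hQ : 0 ≤ Q)
    (hT : T^2 ≤ m*Q) : u*T ≤ c*(Q+u^2) := by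
  have h4c : (0:ℝ) < 4*c := by linarith
  refine le_of_mul_le_mul_left ?_ h4c
  nlinarith [sq_nonneg (2*c*u - T), mul_nonneg (sub_nonneg.2 hm) hQ]

private lemma keyB (c n u t v S Q2 : ℝ) (hc1 : 1 ≤ c)
    (hcase : (c = 1 ∧ n ≤ 3) ∨ n = 4*c^2 - 1) (hn : 0 ≤ n) (hQ2 : 0 ≤ Q2)
    (hS : S^2 ≤ n*Q2) (hSt : n*t ≤ S)
    (ht : 0 ≤ t) (htu : t ≤ u) :
    (u-t)*S + v*(u+t) ≤ c*(Q2+u^2+v^2) := by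
  have key : 4*c*((u-t)*S) + (u+t)^2 ≤ 4*c^2*(Q2+u^2) := by
    rcases hcase with ⟨rfl, hn3⟩ | hn4
    · rcases eq_or_lt_of_le hn with h0 | hn'
      · have hS0 : S = 0 := by
          have : S^2 ≤ 0 := by nlinarith [hS]
          nlinarith [sq_nonneg S]
        rw [hS0]; nlinarith
      · have key' : n*(4*1*((u-t)*S) + (u+t)^2) ≤ n*(4*1^2*(Q2+u^2)) := by
          nlinarith [sq_nonneg (2*S - n*(u-t)),
            mul_nonneg (mul_nonneg hn (by linarith : (0:ℝ) ≤ 3 - n)) (sq_nonneg (u-t)),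
            mul_nonneg (mul_nonneg hn ht) (sub_nonneg.2 htu), hS]
        exact le_of_mul_le_mul_left key' hn'
    · subst hn4
      have hn' : (0:ℝ) < 4*c^2-1 := by nlinarith
      have hc2u : 0 ≤ c^2*(2*u-t) - u := by
        nlinarith [mul_nonneg (by nlinarith : (0:ℝ) ≤ c^2-1) (by linarith : (0:ℝ) ≤ 2*u-t)]
      have key' : (4*c^2-1)*(4*c*((u-t)*S) + (u+t)^2) ≤ (4*c^2-1)*(4*c^2*(Q2+u^2)) := by
        nlinarith [sq_nonneg (2*c*S - (4*c^2-1)*(u-t)),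
          mul_nonneg (by positivity : (0:ℝ) ≤ 4*c^2) (sub_nonneg.2 hS),
          mul_nonneg (mul_nonneg hn ht) hc2u]
      exact le_of_mul_le_mul_left key' hn'
  have h4c : (0:ℝ) < 4*c := by linarith
  refine le_of_mul_le_mul_left ?_ h4c
  nlinarith [key, sq_nonneg (2*c*v - (u+t))]

set_option maxHeartbeats 1000000 in
theorem stmt_15 {k : ℕ} (hk : 2 ≤ k) (y a : Fin k → ℝ) (hy : ∀ i, 0 ≤ y i)
    (hay : ∀ i, a i ≤ y i) (hpair : ∀ i j, i ≠ j → 0 ≤ a i + a j) (p : Fin k) :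
    ∑ i ∈ Finset.univ \ {p}, y i * (a p - a i) ≤
      max 1 (Real.sqrt (((k : ℝ) - 1) / 4)) * ∑ i, y i ^ 2 := by
  have hk' : (2:ℝ) ≤ (k:ℝ) := by exact_mod_cast hk
  have hx : (0:ℝ) ≤ ((k:ℝ)-1)/4 := by linarith
  set c := max 1 (Real.sqrt (((k : ℝ) - 1) / 4)) with hcdef
  have hc1 : (1:ℝ) ≤ c := le_max_left _ _
  have hsq : Real.sqrt (((k:ℝ)-1)/4) ^ 2 = ((k:ℝ)-1)/4 := Real.sq_sqrt hx
  have hc2 : ((k:ℝ)-1)/4 ≤ c^2 := by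
    have h := le_max_right 1 (Real.sqrt (((k : ℝ) - 1) / 4))
    nlinarith [Real.sqrt_nonneg (((k:ℝ)-1)/4)]
  set s1 : Finset (Fin k) := Finset.univ \ {p} with hs1def
  have hps1 : ∀ i ∈ s1, i ≠ p := by
    intro i hi
    simpa [hs1def, Finset.mem_sdiff] using hi
  have hcard1 : (s1.card : ℝ) = (k:ℝ) - 1 := by
    have : s1.card = k - 1 := by
      rw [hs1def, Finset.card_sdiff_of_subset (by simp)]; simp
    rw [this, Nat.cast_sub (by omega)]; simp
  have hsumsq : ∑ i, y i ^ 2 = ∑ i ∈ s1, y i ^ 2 + y p ^ 2 := by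
    rw [hs1def]
    exact Finset.sum_eq_sum_sdiff_singleton_add (Finset.mem_univ p) _
  have hQ1 : (0:ℝ) ≤ ∑ i ∈ s1, y i ^ 2 :=
    Finset.sum_nonneg fun i _ => sq_nonneg _
  have hcauchy1 : (∑ i ∈ s1, y i)^2 ≤ ((k:ℝ)-1) * ∑ i ∈ s1, y i ^ 2 := by
    have h := sq_sum_le_card_mul_sum_sq (s := s1) (f := y)
    calc (∑ i ∈ s1, y i)^2 ≤ (s1.card : ℝ) * ∑ i ∈ s1, y i ^ 2 := by exact_mod_cast h
      _ = ((k:ℝ)-1) * ∑ i ∈ s1, y i ^ 2 := by rw [hcard1]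
  by_cases hall : ∀ i, 0 ≤ a i
  · -- all a i nonnegative
    have h1 : ∑ i ∈ s1, y i * (a p - a i) ≤ (∑ i ∈ s1, y i) * y p := by
      rw [Finset.sum_mul]
      refine Finset.sum_le_sum fun i hi => ?_
      have := hall i; have := hay p; have := hy i
      nlinarith
    have h2 := keyA c (y p) (∑ i ∈ s1, y i) (∑ i ∈ s1, y i ^ 2) ((k:ℝ)-1)
      hc1 (by linarith) hQ1 hcauchy1
    rw [hsumsq]; nlinarith [h1, h2]
  · push_neg at hall
    obtain ⟨ℓ, hℓ⟩ := hall
    by_cases hpℓ : p = ℓ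
    · -- a p < 0 : every term nonpositive
      subst hpℓ
      have hsum : ∑ i ∈ s1, y i * (a p - a i) ≤ 0 := by
        refine Finset.sum_nonpos fun i hi => ?_
        have hne : i ≠ p := hps1 i hi
        have h := hpair i p hne
        have := hy i
        nlinarith
      have : (0:ℝ) ≤ c * ∑ i, y i ^ 2 :=
        mul_nonneg (by linarith) (Finset.sum_nonneg fun i _ => sq_nonneg _)
      linarith
    · -- p ≠ ℓ, a ℓ < 0
      have hℓs1 : ℓ ∈ s1 := by
        rw [hs1def]; simp [Ne.symm hpℓ]
      set s2 : Finset (Fin k) := s1 \ {ℓ} with hs2def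
      have hmem2 : ∀ i ∈ s2, i ≠ p ∧ i ≠ ℓ := by
        intro i hi
        rw [hs2def, Finset.mem_sdiff, Finset.mem_singleton] at hi
        exact ⟨hps1 i hi.1, hi.2⟩
      have hcard2 : (s2.card : ℝ) = (k:ℝ) - 2 := by
        have h1 : s2.card = s1.card - 1 := by
          rw [hs2def, Finset.card_sdiff_of_subset (by simpa using hℓs1)]; simp
        have h2 : s1.card = k - 1 := by
          rw [hs1def, Finset.card_sdiff_of_subset (by simp)]; simp
        rw [h1, h2]
        rw [Nat.cast_sub (by omega), Nat.cast_sub (by omega)]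
        push_cast; ring
      set t : ℝ := -a ℓ with htdef
      have ht0 : 0 ≤ t := by rw [htdef]; linarith
      have hta : ∀ i, i ≠ ℓ → t ≤ a i := by
        intro i hi
        have := hpair i ℓ hi
        rw [htdef]; linarith
      have htyi : ∀ i, i ≠ ℓ → t ≤ y i := fun i hi => le_trans (hta i hi) (hay i)
      have htu : t ≤ y p := htyi p hpℓ
      set S : ℝ := ∑ i ∈ s2, y i with hSdef
      set Q2 : ℝ := ∑ i ∈ s2, y i ^ 2 with hQ2def
      have hQ2 : (0:ℝ) ≤ Q2 := Finset.sum_nonneg fun i _ => sq_nonneg _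
      have hcauchy2 : S^2 ≤ ((k:ℝ)-2) * Q2 := by
        have h := sq_sum_le_card_mul_sum_sq (s := s2) (f := y)
        calc S^2 ≤ (s2.card : ℝ) * Q2 := by exact_mod_cast h
          _ = ((k:ℝ)-2) * Q2 := by rw [hcard2]
      have hSt : ((k:ℝ)-2)*t ≤ S := by
        have h := Finset.card_nsmul_le_sum s2 y t (fun i hi => htyi i (hmem2 i hi).2)
        rw [nsmul_eq_mul] at h
        rw [← hcard2]; exact h
      have hsplit1 : ∑ i ∈ s1, y i * (a p - a i)
          = ∑ i ∈ s2, y i * (a p - a i) + y ℓ * (a p - a ℓ) :=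
        Finset.sum_eq_sum_sdiff_singleton_add hℓs1 _
      have hsplit2 : ∑ i ∈ s1, y i ^ 2 = Q2 + y ℓ ^ 2 :=
        Finset.sum_eq_sum_sdiff_singleton_add hℓs1 _
      have hb1 : ∑ i ∈ s2, y i * (a p - a i) ≤ (y p - t) * S := by
        rw [hSdef, Finset.mul_sum]
        refine Finset.sum_le_sum fun i hi => ?_
        obtain ⟨_, hiℓ⟩ := hmem2 i hi
        have h1 := hta i hiℓ
        have h2 := hay p
        have h3 := hy i
        nlinarith
      have hb2 : y ℓ * (a p - a ℓ) ≤ y ℓ * (y p + t) := by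
        have h1 := hay p
        have h2 := hy ℓ
        have : a p - a ℓ = a p + t := by rw [htdef]; ring
        nlinarith
      have hcase : (c = 1 ∧ ((k:ℝ)-2) ≤ 3) ∨ ((k:ℝ)-2) = 4*c^2 - 1 := by
        rcases le_total (Real.sqrt (((k : ℝ) - 1) / 4)) 1 with h1 | h1
        · left
          constructor
          · rw [hcdef]; exact max_eq_left h1
          · nlinarith [Real.sqrt_nonneg (((k:ℝ)-1)/4)]
        · right
          have hceq : c = Real.sqrt (((k : ℝ) - 1) / 4) := max_eq_right h1
          rw [hceq, hsq]; ring
      have hfin := keyB c ((k:ℝ)-2) (y p) t (y ℓ) S Q2 hc1 hcase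
        (by linarith) hQ2 hcauchy2 hSt ht0 htu
      rw [hsumsq, hsplit1, hsplit2]
      nlinarith [hfin, hb1, hb2]
end

section
/- Let g : 2^U → ℝ be submodular and define the biset function f on pairs (S,T) of disjoint subsets of U by f(S,T) = g(S) + g(U \ T) − g(U). Then f is bisubmodular: for all disjoint pairs (S_1,S_2) and (T_1,T_2), f(S_1,S_2) + f(T_1,T_2) ≥ f(S_1 ∩ T_1, S_2 ∩ T_2) + f((S_1 ∪ T_1)\(S_2 ∪ T_2), (S_2 ∪ T_2)\(S_1 ∪ T_1)). -/
theorem stmt_17 {U : Type*} [Fintype U] [DecidableEq U]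
    (g : Finset U → ℝ)
    (hsub : ∀ A B : Finset U, g (A ∩ B) + g (A ∪ B) ≤ g A + g B)
    (f : Finset U → Finset U → ℝ)
    (hf : ∀ S T : Finset U, f S T = g S + g (Finset.univ \ T) - g Finset.univ) :
    ∀ S₁ S₂ T₁ T₂ : Finset U, Disjoint S₁ S₂ → Disjoint T₁ T₂ →
      f (S₁ ∩ T₁) (S₂ ∩ T₂) + f ((S₁ ∪ T₁) \ (S₂ ∪ T₂)) ((S₂ ∪ T₂) \ (S₁ ∪ T₁)) ≤
        f S₁ S₂ + f T₁ T₂ := by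
  intro S₁ S₂ T₁ T₂ _ _
  have h1 := hsub S₁ T₁
  have h2 := hsub (Finset.univ \ S₂) (Finset.univ \ T₂)
  have h3 := hsub (S₁ ∪ T₁) (Finset.univ \ (S₂ ∪ T₂))
  have e1 : (Finset.univ \ S₂) ∩ (Finset.univ \ T₂) = Finset.univ \ (S₂ ∪ T₂) := by
    ext x; simp
  have e2 : (Finset.univ \ S₂) ∪ (Finset.univ \ T₂) = Finset.univ \ (S₂ ∩ T₂) := by
    ext x; simp; tauto
  have e3 : (S₁ ∪ T₁) ∩ (Finset.univ \ (S₂ ∪ T₂)) = (S₁ ∪ T₁) \ (S₂ ∪ T₂) := by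
    ext x; simp
  have e4 : (S₁ ∪ T₁) ∪ (Finset.univ \ (S₂ ∪ T₂)) = Finset.univ \ ((S₂ ∪ T₂) \ (S₁ ∪ T₁)) := by
    ext x; simp; tauto
  rw [e1, e2] at h2
  rw [e3, e4] at h3
  simp only [hf]
  linarith
end

section
/- Let g : 2^U → ℝ be submodular, and f(S,T) = g(S) + g(U\T) − g(U) its bisubmodular embedding. If (O_1, O_2) maximizes f over pairs of disjoint subsets, then both O_1 and U \ O_2 are maximizers of g. -/
theorem stmt_18 {U : Type*} [Fintype U] [DecidableEq U]
    (g : Finset U → ℝ)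
    (hsub : ∀ A B : Finset U, g (A ∩ B) + g (A ∪ B) ≤ g A + g B)
    (f : Finset U → Finset U → ℝ)
    (hf : ∀ S T : Finset U, f S T = g S + g (Finset.univ \ T) - g Finset.univ)
    (O₁ O₂ : Finset U) (hO : Disjoint O₁ O₂)
    (hmax : ∀ S T : Finset U, Disjoint S T → f S T ≤ f O₁ O₂) :
    (∀ A : Finset U, g A ≤ g O₁) ∧ (∀ A : Finset U, g A ≤ g (Finset.univ \ O₂)) := by
  have key : ∀ A : Finset U, 2 * g A ≤ g O₁ + g (Finset.univ \ O₂) := by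
    intro A
    have hd : Disjoint A (Finset.univ \ A) := Finset.disjoint_sdiff
    have := hmax A (Finset.univ \ A) hd
    rw [hf, hf, Finset.sdiff_sdiff_self_left, Finset.univ_inter] at this
    linarith
  have h1 : g O₁ ≤ g (Finset.univ \ O₂) := by have := key O₁; linarith
  have h2 : g (Finset.univ \ O₂) ≤ g O₁ := by have := key (Finset.univ \ O₂); linarith
  constructor <;> intro A <;> have := key A <;> linarith
end
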